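/- Composing the diagonal scaling, zero-padding, circulant embedding, and DFT diagonalization yields correctness of the DVM–vector product algorithm: for any x ∈ ℂ^N, D̂_N · Jᵀ · F_M* · D̆_M · F_M · J · D̂_N · x = Ã_N x, where Ã_N[k,l] = α^{kl}, under the hypotheses of the DVM factorization (β² = α, M = 2N, D̆_M = diag(√M F_M c) with c the circulant first column). -/

import Mathlib

open Complex ComplexConjugate
open scoped Matrix

/-!
With `ω = exp(-2πi/M)`, orthogonality of the characters `m ↦ ω^{mt}` shows that
`F_Mᴴ · diag(√M F_M c) · F_M` is the circulant matrix with first column `c`. Because `c` is the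
even, wrapped-around chirp `m ↦ β^{-m²}`, the leading `N × N` block of that circulant, which is what
`Jᵀ · _ · J` extracts, is the Toeplitz matrix `β^{-(k-l)²}`. Finally the identity
`k² - (k-l)² + l² = 2kl` turns `D̂_N · (β^{-(k-l)²}) · D̂_N` into `(β²)^{kl} = α^{kl}`.
-/

theorem IsPrimitiveRoot.sum_zpow_mul_eq_ite {K : Type*} [Field K] {ζ : K} {M : ℕ}
    (hζ : IsPrimitiveRoot ζ M) (t : ℤ) :
    ∑ m : Fin M, ζ ^ ((m : ℤ) * t) = if (M : ℤ) ∣ t then (M : K) else 0 := by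
  simp only [mul_comm _ t, zpow_mul, zpow_natCast]
  rw [Fin.sum_univ_eq_sum_range (fun i => (ζ ^ t) ^ i)]
  split_ifs with h
  · simp [(hζ.zpow_eq_one_iff_dvd t).mpr h]
  · have hpow : (ζ ^ t) ^ M = 1 := by
      rw [← zpow_natCast, ← zpow_mul, mul_comm, zpow_mul, zpow_natCast, hζ.pow_eq_one, one_zpow]
    rw [geom_sum_eq (mt (hζ.zpow_eq_one_iff_dvd t).mp h), hpow, sub_self, zero_div]

theorem Fin.natCast_dvd_add_sub_iff_eq_sub {M : ℕ} [NeZero M] (a b j : Fin M) :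
    (M : ℤ) ∣ (j + b - a) ↔ j = a - b := by
  rw [eq_sub_iff_add_eq, Fin.ext_iff, Fin.val_add, ← Int.natCast_inj, Int.natCast_emod,
    ← Int.emod_eq_of_lt (Int.natCast_nonneg (a : ℕ)) (by exact_mod_cast a.isLt : ((a : ℕ) : ℤ) < M),
    Int.emod_eq_emod_iff_emod_sub_eq_zero, Int.dvd_iff_emod_eq_zero]
  push_cast
  rw [Int.sub_emod, Int.emod_emod, ← Int.sub_emod]

theorem isPrimitiveRoot_exp_neg (M : ℕ) (hM : M ≠ 0) :
    IsPrimitiveRoot (exp (-2 * Real.pi * I / M)) M := by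
  have := (isPrimitiveRoot_exp M hM).inv
  rwa [← exp_neg, ← neg_div, ← neg_mul, ← neg_mul] at this

theorem conj_exp_neg_two_pi_I_div (M : ℕ) :
    conj (exp (-2 * Real.pi * I / M)) = (exp (-2 * Real.pi * I / M))⁻¹ := by
  rw [← Complex.exp_conj, ← exp_neg]
  congr 1
  simp [map_div₀, conj_I, map_ofNat]
  ring

noncomputable def dftMatrix (M : ℕ) : Matrix (Fin M) (Fin M) ℂ :=
  Matrix.of fun k l => (Real.sqrt M : ℂ)⁻¹ * exp (-2 * Real.pi * I / M) ^ ((k : ℕ) * (l : ℕ))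

section dftMatrix

variable {M : ℕ}

local notation "ω" => exp (-2 * Real.pi * I / M)

theorem star_dftMatrix_mul_dftMatrix (m a b : Fin M) :
    star (dftMatrix M m a) * dftMatrix M m b = (M : ℂ)⁻¹ * ω ^ ((m : ℤ) * (b - a)) := by
  have hω : ω ≠ 0 := exp_ne_zero _
  have hsq : ((Real.sqrt M : ℂ)⁻¹) * (Real.sqrt M : ℂ)⁻¹ = (M : ℂ)⁻¹ := by
    rw [← mul_inv, ← ofReal_mul, Real.mul_self_sqrt (Nat.cast_nonneg M), ofReal_natCast]
  simp only [dftMatrix, Matrix.of_apply, star_mul', star_inv₀, star_pow, Complex.star_def,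
    conj_exp_neg_two_pi_I_div, conj_ofReal, inv_pow]
  rw [mul_sub, zpow_sub₀ hω, div_eq_mul_inv, mul_mul_mul_comm, hsq]
  simp only [← zpow_natCast, Nat.cast_mul]
  ring

theorem sqrt_mul_dftMatrix [NeZero M] (m j : Fin M) :
    (Real.sqrt M : ℂ) * dftMatrix M m j = ω ^ ((m : ℤ) * j) := by
  have hs : (Real.sqrt M : ℂ) ≠ 0 := by
    exact_mod_cast (Real.sqrt_pos.2 (Nat.cast_pos.2 (NeZero.pos M))).ne'
  rw [dftMatrix, Matrix.of_apply, mul_inv_cancel_left₀ hs]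
  rw [← zpow_natCast, Nat.cast_mul]

theorem dftMatrix_conjTranspose_mul_diagonal_mul_dftMatrix [NeZero M] (c : Fin M → ℂ) :
    (dftMatrix M)ᴴ * Matrix.diagonal (fun m => (Real.sqrt M : ℂ) * (dftMatrix M *ᵥ c) m) *
      dftMatrix M = Matrix.circulant c := by
  ext a b
  have hω : ω ≠ 0 := exp_ne_zero _
  have hM : (M : ℂ) ≠ 0 := Nat.cast_ne_zero.2 (NeZero.ne M)
  have hterm : ∀ m j, star (dftMatrix M m a) * ((Real.sqrt M : ℂ) * (dftMatrix M m j * c j)) *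
      dftMatrix M m b =
      c j * ((M : ℂ)⁻¹ * ω ^ ((m : ℤ) * (j + b - a))) := fun m j => by
    calc star (dftMatrix M m a) * ((Real.sqrt M : ℂ) * (dftMatrix M m j * c j)) * dftMatrix M m b
        = c j * ((Real.sqrt M : ℂ) * dftMatrix M m j) *
            (star (dftMatrix M m a) * dftMatrix M m b) := by ring
      _ = c j * ((M : ℂ)⁻¹ * ω ^ ((m : ℤ) * (j + b - a))) := by
        rw [sqrt_mul_dftMatrix, star_dftMatrix_mul_dftMatrix, ← add_sub_assoc',
          mul_add (m : ℤ), zpow_add₀ hω]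
        ring
  calc ((dftMatrix M)ᴴ * Matrix.diagonal (fun m => (Real.sqrt M : ℂ) * (dftMatrix M *ᵥ c) m) *
        dftMatrix M) a b
      = ∑ m : Fin M, ∑ j : Fin M, c j * ((M : ℂ)⁻¹ * ω ^ ((m : ℤ) * (j + b - a))) := by
        rw [Matrix.mul_apply]
        simp only [Matrix.mul_diagonal, Matrix.conjTranspose_apply, Matrix.mulVec, dotProduct,
          Finset.mul_sum, Finset.sum_mul, hterm]
    _ = ∑ j, c j * if j = a - b then 1 else 0 := by
        rw [Finset.sum_comm]
        simp only [← Finset.mul_sum, (isPrimitiveRoot_exp_neg M (NeZero.ne M)).sum_zpow_mul_eq_ite,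
          Fin.natCast_dvd_add_sub_iff_eq_sub]
        congr! 2
        split_ifs <;> simp [hM]
    _ = Matrix.circulant c a b := by simp [Matrix.circulant_apply]

end dftMatrix

theorem Matrix.transpose_one_submatrix_mul_mul_one_submatrix {m n R : Type*} [Fintype m]
    [DecidableEq m] [NonAssocSemiring R] (e : n → m) (X : Matrix m m R) :
    ((1 : Matrix m m R).submatrix id e)ᵀ * X * (1 : Matrix m m R).submatrix id e =
      X.submatrix e e := by
  ext i j
  simp [Matrix.mul_apply, Matrix.one_apply]

theorem circulant_submatrix_castLE {G : Type*} [DivInvMonoid G] {N : ℕ} {β : G}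
    {c : Fin (2 * N) → G}
    (hc₁ : ∀ m : Fin (2 * N), (m : ℕ) < N → c m = β ^ (-(m : ℤ) ^ 2))
    (hc₃ : ∀ m : Fin (2 * N), N < (m : ℕ) → c m = β ^ (-(2 * (N : ℤ) - (m : ℤ)) ^ 2))
    (h : N ≤ 2 * N) :
    (Matrix.circulant c).submatrix (Fin.castLE h) (Fin.castLE h) =
      Matrix.of fun k l : Fin N => β ^ (-((k : ℤ) - l) ^ 2) := by
  ext k l
  rw [Matrix.submatrix_apply, Matrix.circulant_apply, Matrix.of_apply]
  rcases le_or_gt l k with hlk | hkl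
  · have hval := Fin.coe_sub_iff_le.2 (show Fin.castLE h l ≤ Fin.castLE h k from hlk)
    rw [hc₁ _ (by simp only [hval, Fin.val_castLE]; omega), hval]
    push_cast [Fin.val_castLE, Nat.cast_sub (show (l : ℕ) ≤ k from hlk)]
    rfl
  · have hval := Fin.coe_sub_iff_lt.2 (show Fin.castLE h k < Fin.castLE h l from hkl)
    rw [hc₃ _ (by simp only [hval, Fin.val_castLE]; omega), hval]
    congr 1
    have : (l : ℕ) ≤ 2 * N + k := by omega
    push_cast [Fin.val_castLE, Nat.cast_sub this]
    ring

theorem zpow_sq_mul_zpow_neg_sub_sq_mul_zpow_sq {G₀ : Type*} [CommGroupWithZero G₀] {β : G₀}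
    (hβ : β ≠ 0) (k l : ℤ) :
    β ^ (k ^ 2) * β ^ (-(k - l) ^ 2) * β ^ (l ^ 2) = (β ^ 2) ^ (k * l) := by
  rw [← zpow_add₀ hβ, ← zpow_add₀ hβ, ← zpow_natCast, ← zpow_mul]
  ring_nf

theorem dvm_mulVec_algorithm_correct_general (N : ℕ) (α β : ℂ) (hα : α ≠ 0)
    (hβ : β ^ 2 = α)
    (A : Matrix (Fin N) (Fin N) ℂ)
    (hA : ∀ k l : Fin N, A k l = α ^ ((k : ℤ) * (l : ℤ)))
    (F : Matrix (Fin (2 * N)) (Fin (2 * N)) ℂ)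
    (hF : ∀ k l : Fin (2 * N), F k l =
      (1 / (Real.sqrt (2 * N) : ℂ)) *
        Complex.exp (-2 * Real.pi * I / (2 * N)) ^ ((k : ℕ) * (l : ℕ)))
    (c : Fin (2 * N) → ℂ)
    (hc₁ : ∀ m : Fin (2 * N), (m : ℕ) < N → c m = β ^ (-(m : ℤ) ^ 2))
    (hc₃ : ∀ m : Fin (2 * N), N < (m : ℕ) → c m = β ^ (-(2 * (N : ℤ) - (m : ℤ)) ^ 2))
    (J : Matrix (Fin (2 * N)) (Fin N) ℂ)
    (hJ : ∀ k l, J k l = if (k : ℕ) = (l : ℕ) then 1 else 0)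
    (Dhat : Matrix (Fin N) (Fin N) ℂ)
    (hDhat : Dhat = Matrix.diagonal fun k : Fin N => β ^ ((k : ℤ) ^ 2))
    (Dbreve : Matrix (Fin (2 * N)) (Fin (2 * N)) ℂ)
    (hDbreve : Dbreve = Matrix.diagonal
      fun l : Fin (2 * N) => (Real.sqrt (2 * N) : ℂ) * (F.mulVec c) l) :
    ∀ x : Fin N → ℂ,
      Dhat.mulVec (J.transpose.mulVec (F.conjTranspose.mulVec
        (Dbreve.mulVec (F.mulVec (J.mulVec (Dhat.mulVec x)))))) = A.mulVec x := by
  intro x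
  rcases N.eq_zero_or_pos with rfl | hN
  · exact Subsingleton.elim _ _
  have : NeZero (2 * N) := ⟨by omega⟩
  have hβ0 : β ≠ 0 := by rintro rfl; simp [← hβ] at hα
  have hle : N ≤ 2 * N := by omega
  have hF' : F = dftMatrix (2 * N) := by
    ext k l
    rw [hF, dftMatrix, Matrix.of_apply, one_div]
    push_cast
    rfl
  have hJ' : J = (1 : Matrix (Fin (2 * N)) (Fin (2 * N)) ℂ).submatrix id (Fin.castLE hle) := by
    ext k l
    simp [hJ, Matrix.one_apply, Fin.ext_iff]
  have hcirc : Fᴴ * Dbreve * F = Matrix.circulant c := by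
    have := dftMatrix_conjTranspose_mul_diagonal_mul_dftMatrix c
    push_cast at this
    rwa [hDbreve, hF']
  have hfactor : Dhat * (Jᵀ * (Fᴴ * Dbreve * F) * J) * Dhat = A := by
    rw [hcirc, hJ', Matrix.transpose_one_submatrix_mul_mul_one_submatrix,
      circulant_submatrix_castLE hc₁ hc₃, hDhat]
    ext k l
    rw [Matrix.mul_diagonal, Matrix.diagonal_mul, Matrix.of_apply, hA, ← hβ,
      zpow_sq_mul_zpow_neg_sub_sq_mul_zpow_sq hβ0]
  rw [← hfactor]
  simp only [Matrix.mulVec_mulVec, Matrix.mul_assoc]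

/-- Correctness of the DVM–vector product algorithm: for every `x ∈ ℂ^N`,
applying in turn the diagonal scaling `D̂_N`, zero-padding `J`, DFT `F_M`,
diagonal `D̆_M = diag(√M F_M c)`, inverse DFT `F_M*`, truncation `Jᵀ`, and
scaling `D̂_N` produces `Ã_N x`, where `Ã_N[k,l] = α^{kl}`, `β² = α`, `M = 2N`. -/
theorem dvm_mulVec_algorithm_correct (N : ℕ) (hN : 1 ≤ N) (α β : ℂ) (hα : α ≠ 0)
    (hβ : β ^ 2 = α)
    (A : Matrix (Fin N) (Fin N) ℂ)
    (hA : ∀ k l : Fin N, A k l = α ^ ((k : ℤ) * (l : ℤ)))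
    (F : Matrix (Fin (2 * N)) (Fin (2 * N)) ℂ)
    (hF : ∀ k l : Fin (2 * N), F k l =
      (1 / (Real.sqrt (2 * N) : ℂ)) *
        Complex.exp (-2 * Real.pi * I / (2 * N)) ^ ((k : ℕ) * (l : ℕ)))
    (c : Fin (2 * N) → ℂ)
    (hc₁ : ∀ m : Fin (2 * N), (m : ℕ) < N → c m = β ^ (-(m : ℤ) ^ 2))
    (hc₂ : ∀ m : Fin (2 * N), (m : ℕ) = N → c m = 1)
    (hc₃ : ∀ m : Fin (2 * N), N < (m : ℕ) → c m = β ^ (-(2 * (N : ℤ) - (m : ℤ)) ^ 2))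
    (J : Matrix (Fin (2 * N)) (Fin N) ℂ)
    (hJ : ∀ k l, J k l = if (k : ℕ) = (l : ℕ) then 1 else 0)
    (Dhat : Matrix (Fin N) (Fin N) ℂ)
    (hDhat : Dhat = Matrix.diagonal fun k : Fin N => β ^ ((k : ℤ) ^ 2))
    (Dbreve : Matrix (Fin (2 * N)) (Fin (2 * N)) ℂ)
    (hDbreve : Dbreve = Matrix.diagonal
      fun l : Fin (2 * N) => (Real.sqrt (2 * N) : ℂ) * (F.mulVec c) l) :
    ∀ x : Fin N → ℂ,
      Dhat.mulVec (J.transpose.mulVec (F.conjTranspose.mulVec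
        (Dbreve.mulVec (F.mulVec (J.mulVec (Dhat.mulVec x)))))) = A.mulVec x :=
  dvm_mulVec_algorithm_correct_general N α β hα hβ A hA F hF c hc₁ hc₃ J hJ Dhat hDhat Dbreve
    hDbreve
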